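/- Let ℐ be a finite set, 𝒪 = ℂ[X^{a,n}]_{(a,n)∈ℐ×ℤ}, and let v = Σ_{(a,n)∈ℐ×ℤ} P^{a,n}(X) D_{a,n} be an element of D̃er 𝒪 whose coefficients have widening gap. For any b,c ∈ ℐ and p ∈ ℤ, let S = Σ_{m∈ℤ} X^{b,m-p} D_{c,m} ∈ D̃er 𝒪. Then the bracket [S, v] is a well-defined element of D̃er 𝒪 and its coefficient collection again has widening gap. The same holds for D := Σ_{(a,m)} m X^{a,m} D_{a,m}. -/

import Mathlib

/-! The `(a,n)`-coefficient of `[P, Q]` only involves `Q^{a,n}` and its derivatives, the `P^{b,m}`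
with `X^{b,m}` a variable of `Q^{a,n}`, and the `Q^{b,m}` with `X^{b,m}` a variable of `P^{a,n}`.
Both `S` and `D` are linear with bounded spread: `P^{a,n}` only involves variables `X^{b,m}` with
`|m - n| ≤ L` (`L = |p|`, resp. `L = 0`) and its derivatives are constants. So if `Q` satisfies the
gap condition for `K + L` at every index within distance `L` of `n`, then `[P, Q]` satisfies it
for `K` at `n`, and the exceptional `n` lie within distance `L` of the finitely many exceptions
of `Q` for `K + L`. -/

open MvPolynomial

/-- 'Widening gap' for a collection of polynomials in `ℂ[X^{b,m}]_{(b,m)∈ℐ×ℤ}`. -/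
def WideningGap {ι : Type*} (P : ι × ℤ → MvPolynomial (ι × ℤ) ℂ) : Prop :=
  ∀ K : ℤ, 1 ≤ K →
    {n : ℤ | ¬ ∀ a : ι,
      P (a, n) ∈ MvPolynomial.supported ℂ {bm : ι × ℤ | |bm.2| < |n| - K}}.Finite

/-- The bracket on the completed space of vector fields `D̃er 𝒪`, computed
coefficient-wise:  the `(a,n)`-coefficient of `[Σ P D, Σ Q D]` is
`Σ_{(b,m)} (P^{b,m} ∂Q^{a,n}/∂X^{b,m} − Q^{b,m} ∂P^{a,n}/∂X^{b,m})`. -/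
noncomputable def derBracket {ι : Type*}
    (P Q : ι × ℤ → MvPolynomial (ι × ℤ) ℂ) :
    ι × ℤ → MvPolynomial (ι × ℤ) ℂ :=
  fun an => ∑ᶠ bm : ι × ℤ,
    (P bm * MvPolynomial.pderiv bm (Q an) - Q bm * MvPolynomial.pderiv bm (P an))

/-- Coefficients of `S = Σ_{m∈ℤ} X^{b,m-p} D_{c,m}`. -/
noncomputable def Scoef {ι : Type*} [DecidableEq ι] (b c : ι) (p : ℤ) :
    ι × ℤ → MvPolynomial (ι × ℤ) ℂ :=
  fun an => if an.1 = c then MvPolynomial.X (b, an.2 - p) else 0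

/-- Coefficients of `D = Σ_{(a,m)} m X^{a,m} D_{a,m}`. -/
noncomputable def Dcoef {ι : Type*} : ι × ℤ → MvPolynomial (ι × ℤ) ℂ :=
  fun am => am.2 • MvPolynomial.X am

namespace MvPolynomial

variable {R σ : Type*} [CommSemiring R]

theorem pderiv_X_mem_supported (s : Set σ) (i j : σ) :
    pderiv i (X j : MvPolynomial σ R) ∈ supported R s := by
  rcases eq_or_ne j i with rfl | hij
  · simpa only [pderiv_X_self] using one_mem _
  · simpa only [pderiv_X_of_ne hij] using zero_mem _

theorem pderiv_mem_supported {s : Set σ} {q : MvPolynomial σ R} (h : q ∈ supported R s)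
    (i : σ) : pderiv i q ∈ supported R s := by
  induction h using Algebra.adjoin_induction with
  | mem x hx =>
    obtain ⟨j, -, rfl⟩ := hx
    exact pderiv_X_mem_supported s i j
  | algebraMap r => simpa only [algebraMap_eq, pderiv_C] using zero_mem _
  | add x y _ _ hx hy => simpa only [map_add] using add_mem hx hy
  | mul x y hx' hy' hx hy =>
    simpa only [pderiv_mul] using add_mem (mul_mem hx hy') (mul_mem hx' hy)

theorem mul_pderiv_mem_supported {s : Set σ} {f g : MvPolynomial σ R} {i : σ}
    (h : i ∈ g.vars → f ∈ supported R s ∧ pderiv i g ∈ supported R s) :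
    f * pderiv i g ∈ supported R s := by
  by_cases hi : i ∈ g.vars
  · exact mul_mem (h hi).1 (h hi).2
  · simpa only [pderiv_eq_zero_of_notMem_vars hi, mul_zero] using zero_mem _

end MvPolynomial

section Bracket

variable {ι : Type*} (P Q : ι × ℤ → MvPolynomial (ι × ℤ) ℂ)

theorem derBracket_summand_finite (an : ι × ℤ) :
    {bm : ι × ℤ | P bm * pderiv bm (Q an) - Q bm * pderiv bm (P an) ≠ 0}.Finite := by
  refine ((Q an).vars.finite_toSet.union (P an).vars.finite_toSet).subset fun bm hbm => ?_
  by_contra hvars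
  simp only [Set.mem_union, Finset.mem_coe, not_or] at hvars
  exact hbm (by simp only [pderiv_eq_zero_of_notMem_vars hvars.1,
    pderiv_eq_zero_of_notMem_vars hvars.2, mul_zero, sub_zero])

variable {P Q}

theorem supported_abs_lt_mono {a b : ℤ} (h : a ≤ b) :
    supported ℂ {x : ι × ℤ | |x.2| < a} ≤ supported ℂ {x | |x.2| < b} :=
  supported_mono fun _ hx => lt_of_lt_of_le hx h

theorem derBracket_mem_supported {s : Set (ι × ℤ)} {an : ι × ℤ}
    (hQ : Q an ∈ supported ℂ s) (hP : ∀ bm ∈ (Q an).vars, P bm ∈ supported ℂ s)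
    (hQ' : ∀ bm ∈ (P an).vars, Q bm ∈ supported ℂ s)
    (hdP : ∀ bm, pderiv bm (P an) ∈ supported ℂ s) :
    derBracket P Q an ∈ supported ℂ s := by
  rw [derBracket, finsum_eq_sum _ (derBracket_summand_finite P Q an)]
  exact sum_mem fun bm _ => sub_mem
    (mul_pderiv_mem_supported fun h => ⟨hP bm h, pderiv_mem_supported hQ bm⟩)
    (mul_pderiv_mem_supported fun h => ⟨hQ' bm h, hdP bm⟩)

theorem WideningGap.derBracket (hQ : WideningGap Q) {L : ℤ} (hL : 0 ≤ L)
    (hP : ∀ an, P an ∈ supported ℂ {x | |x.2 - an.2| ≤ L})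
    (hdP : ∀ an bm, pderiv bm (P an) ∈ supported ℂ ∅) :
    WideningGap (derBracket P Q) := by
  intro K hK
  have hB := hQ (K + L) (by omega)
  refine (hB.biUnion fun m _ => Set.finite_Icc (m - L) (m + L)).subset fun n hn => ?_
  by_contra hfar
  simp only [Set.mem_iUnion, Set.mem_Icc, exists_prop, not_exists, not_and] at hfar
  have hnear : ∀ m, |m - n| ≤ L → ∀ a, Q (a, m) ∈ supported ℂ {x | |x.2| < |m| - (K + L)} := by
    intro m hm
    obtain ⟨hmn, hnm⟩ := abs_le.mp hm
    exact not_not.mp fun h => hfar m h (by linarith) (by linarith)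
  have hgood : ∀ m, |m - n| ≤ L → ∀ a, Q (a, m) ∈ supported ℂ {x | |x.2| < |n| - K} :=
    fun m hm a => supported_abs_lt_mono (by linarith [abs_sub_abs_le_abs_sub m n]) (hnear m hm a)
  have hn0 : |n - n| ≤ L := by simpa using hL
  refine hn fun a => derBracket_mem_supported (hgood n hn0 a) (fun bm hbm => ?_)
    (fun bm hbm => hgood bm.2 (mem_supported.mp (hP (a, n)) hbm) bm.1)
    fun bm => supported_mono (Set.empty_subset _) (hdP _ bm)
  have hbm' : |bm.2| < |n| - (K + L) := mem_supported.mp (hnear n hn0 a) hbm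
  refine supported_mono (fun x hx => ?_) (hP bm)
  rw [Set.mem_ofPred_eq] at hx ⊢
  linarith [abs_sub_abs_le_abs_sub x.2 bm.2]

end Bracket

section Coefficients

variable {ι : Type*}

theorem Scoef_mem_supported [DecidableEq ι] (b c : ι) (p : ℤ) (an : ι × ℤ) :
    Scoef b c p an ∈ supported ℂ {x | |x.2 - an.2| ≤ |p|} := by
  unfold Scoef
  split
  · exact X_mem_supported.mpr (by simp)
  · exact zero_mem _

theorem pderiv_Scoef_mem_supported [DecidableEq ι] (b c : ι) (p : ℤ) (an bm : ι × ℤ)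
    (s : Set (ι × ℤ)) : pderiv bm (Scoef b c p an) ∈ supported ℂ s := by
  unfold Scoef
  split
  · exact pderiv_X_mem_supported _ _ _
  · simpa only [map_zero] using zero_mem _

theorem Dcoef_mem_supported (an : ι × ℤ) : Dcoef an ∈ supported ℂ {x | |x.2 - an.2| ≤ 0} :=
  zsmul_mem (X_mem_supported.mpr (by simp)) _

theorem pderiv_Dcoef_mem_supported (an bm : ι × ℤ) (s : Set (ι × ℤ)) :
    pderiv bm (Dcoef an) ∈ supported ℂ s := by
  simpa only [Dcoef, map_zsmul] using zsmul_mem (pderiv_X_mem_supported s bm an) an.2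

end Coefficients

theorem stmt6_general {ι : Type*} [DecidableEq ι]
    (v : ι × ℤ → MvPolynomial (ι × ℤ) ℂ) (hv : WideningGap v)
    (b c : ι) (p : ℤ) :
    (∀ an : ι × ℤ,
      {bm : ι × ℤ |
        Scoef b c p bm * MvPolynomial.pderiv bm (v an)
          - v bm * MvPolynomial.pderiv bm (Scoef b c p an) ≠ 0}.Finite) ∧
    WideningGap (derBracket (Scoef b c p) v) ∧
    (∀ an : ι × ℤ,
      {bm : ι × ℤ |
        Dcoef bm * MvPolynomial.pderiv bm (v an)
          - v bm * MvPolynomial.pderiv bm (Dcoef an) ≠ 0}.Finite) ∧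
    WideningGap (derBracket (Dcoef : ι × ℤ → _) v) :=
  ⟨derBracket_summand_finite _ v,
    hv.derBracket (abs_nonneg p) (Scoef_mem_supported b c p)
      fun an bm => pderiv_Scoef_mem_supported b c p an bm ∅,
    derBracket_summand_finite _ v,
    hv.derBracket le_rfl Dcoef_mem_supported fun an bm => pderiv_Dcoef_mem_supported an bm ∅⟩

/-- The adjoint action of `S = Σ_m X^{b,m-p} D_{c,m}` and of
`D = Σ_{(a,m)} m X^{a,m} D_{a,m}` on `D̃er 𝒪` is well defined (each bracket
coefficient is a finite sum) and preserves the widening-gap subspace. -/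
theorem stmt6 {ι : Type*} [Fintype ι] [DecidableEq ι]
    (v : ι × ℤ → MvPolynomial (ι × ℤ) ℂ) (hv : WideningGap v)
    (b c : ι) (p : ℤ) :
    (∀ an : ι × ℤ,
      {bm : ι × ℤ |
        Scoef b c p bm * MvPolynomial.pderiv bm (v an)
          - v bm * MvPolynomial.pderiv bm (Scoef b c p an) ≠ 0}.Finite) ∧
    WideningGap (derBracket (Scoef b c p) v) ∧
    (∀ an : ι × ℤ,
      {bm : ι × ℤ |
        Dcoef bm * MvPolynomial.pderiv bm (v an)
          - v bm * MvPolynomial.pderiv bm (Dcoef an) ≠ 0}.Finite) ∧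
    WideningGap (derBracket (Dcoef : ι × ℤ → _) v) :=
  stmt6_general v hv b c p
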